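/- For integers ℓ ≥ 1 and k ≥ 2 and each i ∈ Fin k, the set S_i = {v ∈ V(ST^ℓ_k) : v 0 = i} is an efficient dominating ℓ-set (perfect ℓ-code) of ST^ℓ_k: every vertex v with v 0 ≠ i has exactly ℓ neighbors lying in S_i. -/

import Mathlib

/-- An ℓ-set permutation: a string of length `k * l` over the alphabet `Fin k`
in which every symbol occurs exactly `l` times. -/
abbrev LSetPerm (k l : ℕ) : Type :=
  {v : Fin (k * l) → Fin k // ∀ j : Fin k, (Finset.univ.filter fun x => v x = j).card = l}

/-- The star ℓ-set transposition graph `ST^ℓ_k`: vertices are the ℓ-set permutations,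
with `v` adjacent to `w` iff `w` is obtained from `v` by transposing the first entry
with an entry of differing value. -/
def STGraph (k l : ℕ) [NeZero (k * l)] : SimpleGraph (LSetPerm k l) :=
  SimpleGraph.fromRel fun v w =>
    ∃ h : Fin (k * l), h ≠ 0 ∧ v.1 h ≠ v.1 0 ∧ w.1 = v.1 ∘ (Equiv.swap 0 h)

/-- for each `i`, the set `S_i = {v : v 0 = i}` is an efficient dominating
ℓ-set (perfect ℓ-code) of `ST^ℓ_k`: every vertex `v` with `v 0 ≠ i` has exactly `ℓ`
neighbors in `S_i`. -/
theorem ST_efficientDominating_lSet (k l : ℕ) (hl : 1 ≤ l) (hk : 2 ≤ k) (i : Fin k) :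
    letI : NeZero (k * l) := ⟨Nat.mul_ne_zero (by omega) (by omega)⟩
    ∀ v : LSetPerm k l, v.1 0 ≠ i →
      {w : LSetPerm k l | (STGraph k l).Adj v w ∧ w.1 0 = i}.ncard = l := by
  haveI : NeZero (k * l) := ⟨Nat.mul_ne_zero (by omega) (by omega)⟩
  intro v hv
  have hcount : ∀ (e : Equiv.Perm (Fin (k * l))) (j : Fin k),
      (Finset.univ.filter fun x => v.1 (e x) = j).card = l := by
    intro e j
    refine Eq.trans ?_ (v.2 j)
    apply Finset.card_nbij' e e.symm <;> intro x hx <;> simp_all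
  set f : Fin (k * l) → LSetPerm k l :=
    fun h => ⟨v.1 ∘ Equiv.swap 0 h, fun j => hcount _ j⟩ with hf
  have hset : {w : LSetPerm k l | (STGraph k l).Adj v w ∧ w.1 0 = i}
      = f '' {h | v.1 h = i} := by
    ext w
    simp only [Set.mem_setOf_eq, Set.mem_image, STGraph, SimpleGraph.fromRel_adj]
    constructor
    · rintro ⟨⟨hne, hrel⟩, hw0⟩
      rcases hrel with ⟨h, h0, hvh, hw⟩ | ⟨h, h0, hwh, hw⟩
      · refine ⟨h, ?_, Subtype.ext hw.symm⟩
        have : w.1 0 = v.1 h := by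
          rw [hw]; simp [Equiv.swap_apply_left]
        rw [← this, hw0]
      · have hw' : w.1 = v.1 ∘ Equiv.swap 0 h := by
          rw [hw]
          ext x
          simp [Equiv.swap_apply_self]
        refine ⟨h, ?_, Subtype.ext hw'.symm⟩
        have : w.1 0 = v.1 h := by
          rw [hw']; simp [Equiv.swap_apply_left]
        rw [← this, hw0]
    · rintro ⟨h, hh, rfl⟩
      have h0 : h ≠ 0 := by
        intro h0; rw [h0] at hh; exact hv hh
      have hvh : v.1 h ≠ v.1 0 := by rw [hh]; exact fun e => hv e.symm
      have hfw0 : (f h).1 0 = i := by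
        simp [hf, Equiv.swap_apply_left, hh]
      refine ⟨⟨?_, Or.inl ⟨h, h0, hvh, rfl⟩⟩, hfw0⟩
      intro he
      apply hvh
      have := congrArg (fun u => u.1 0) he
      simpa [hf, Equiv.swap_apply_left] using this.symm
  rw [hset]
  have hinj : Set.InjOn f {h | v.1 h = i} := by
    intro a ha b hb hab
    by_contra hne
    have ha0 : a ≠ 0 := fun e => hv (e ▸ ha)
    have hb0 : b ≠ 0 := fun e => hv (e ▸ hb)
    have := congrArg (fun u => u.1 a) hab
    simp only [hf, Function.comp_apply] at this
    rw [Equiv.swap_apply_right, Equiv.swap_apply_of_ne_of_ne ha0 hne, ha] at this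
    exact hv this
  rw [Set.ncard_image_of_injOn hinj]
  have : {h | v.1 h = i} = ↑(Finset.univ.filter fun h => v.1 h = i) := by
    ext x; simp
  rw [this, Set.ncard_coe_finset, v.2 i]
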